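/- (Hyperbolic oscillator on H²: finite discrete spectrum.) Let k > 0 (the space has curvature κ = −k), γ₁ = 2i, γ₂ = k, so the Type I spectrum is E(n) = 2n − kn² and the structure function satisfies Φ(B, E(n), −n/2) = 4B(n + 1 − B)(1 − k(B − 1))(1 − k(n − B)) for all B ∈ ℂ. Suppose n_max is an integer with 1 ≤ n_max < 1/k + 1/2. Then: (i) k < 2; (ii) E(n) > 0 for every integer 1 ≤ n ≤ n_max; (iii) E(n+1) − E(n) = 2 − k(2n + 1) > 0 for every integer 1 ≤ n ≤ n_max − 1; (iv) Φ(B, E(n), −n/2) > 0 for all integers B, n with 1 ≤ B ≤ n ≤ n_max (in particular 1 − k(B − 1) > 0 and 1 − k(n − B) > 0). -/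
import Mathlib


noncomputable section
open Complex

/-- `Φ₁(B,E,u) = (1/4)(E − 2iγ₁(B+u) + 4γ₂(B+u)²)`. -/
def Phi1 (γ₁ γ₂ B E u : ℂ) : ℂ :=
  (1/4) * (E - 2*I*γ₁*(B + u) + 4*γ₂*(B + u)^2)

/-- `Φ₂(B,E,u) = E + 2iγ₁(B+u−1) + 4γ₂(B+u−1)²`. -/
def Phi2 (γ₁ γ₂ B E u : ℂ) : ℂ :=
  E + 2*I*γ₁*(B + u - 1) + 4*γ₂*(B + u - 1)^2

/-- `Φ = Φ₁·Φ₂`, the structure function of the quadratic quantum Zernike system. -/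
def Phi (γ₁ γ₂ B E u : ℂ) : ℂ := Phi1 γ₁ γ₂ B E u * Phi2 γ₁ γ₂ B E u

lemma phi_key (k n B : ℂ) :
    Phi (2*I) k B (2*n - k*n^2) (-n/2)
      = 4 * B * (n + 1 - B) * (1 - k*(B - 1)) * (1 - k*(n - B)) := by
  simp only [Phi, Phi1, Phi2]
  ring_nf
  simp only [Complex.I_sq, Complex.I_pow_four]
  ring

/-- the hyperbolic oscillator on `H²`, curvature `κ = −k < 0`:
with `γ₁ = 2i`, `γ₂ = k`, the Type I spectrum is `E(n) = 2n − kn²` with the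
stated structure function; if `1 ≤ n_max < 1/k + 1/2` then `k < 2`, the spectrum
is positive and increasing up to `n_max`, and `Φ > 0` for `1 ≤ B ≤ n ≤ n_max`. -/
theorem hyperbolic_oscillator_finite_spectrum (k : ℝ) (hk : 0 < k)
    (nmax : ℕ) (h1 : 1 ≤ nmax) (h2 : (nmax : ℝ) < 1/k + 1/2) :
    -- the Type I spectrum
    (∀ n : ℕ, 1 ≤ n →
      -(n : ℂ) * (I*(2*I) + (k : ℂ)*(n : ℂ)) = 2*(n : ℂ) - (k : ℂ)*(n : ℂ)^2) ∧
    -- the structure function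
    (∀ n : ℕ, 1 ≤ n → ∀ B : ℂ,
      Phi (2*I) (k : ℂ) B (2*(n : ℂ) - (k : ℂ)*(n : ℂ)^2) (-(n : ℂ)/2)
        = 4 * B * ((n : ℂ) + 1 - B) * (1 - (k : ℂ)*(B - 1)) * (1 - (k : ℂ)*((n : ℂ) - B))) ∧
    -- (i)
    (k < 2) ∧
    -- (ii)
    (∀ n : ℕ, 1 ≤ n → n ≤ nmax → 0 < 2*(n : ℝ) - k*(n : ℝ)^2) ∧
    -- (iii)
    (∀ n : ℕ, 1 ≤ n → n + 1 ≤ nmax →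
      (2*((n : ℝ) + 1) - k*((n : ℝ) + 1)^2) - (2*(n : ℝ) - k*(n : ℝ)^2)
          = 2 - k*(2*(n : ℝ) + 1) ∧
      0 < 2 - k*(2*(n : ℝ) + 1)) ∧
    -- (iv)
    (∀ B n : ℕ, 1 ≤ B → B ≤ n → n ≤ nmax →
      0 < 1 - k*((B : ℝ) - 1) ∧ 0 < 1 - k*((n : ℝ) - (B : ℝ)) ∧
      ∃ r : ℝ, 0 < r ∧
        Phi (2*I) (k : ℂ) (B : ℂ) (2*(n : ℂ) - (k : ℂ)*(n : ℂ)^2) (-(n : ℂ)/2) = (r : ℂ)) := by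
  have h1' : (1 : ℝ) ≤ (nmax : ℝ) := by exact_mod_cast h1
  have hki : k * (1/k) = 1 := by field_simp
  have h2' : k * (nmax : ℝ) < 1 + k/2 := by
    have := mul_lt_mul_of_pos_left h2 hk
    nlinarith
  have hk2 : k < 2 := by nlinarith
  refine ⟨?_, ?_, hk2, ?_, ?_, ?_⟩
  · intro n _
    have : I * (2*I) = -2 := by
      rw [show I * (2*I) = 2 * I^2 by ring, Complex.I_sq]; ring
    rw [this]; ring
  · intro n _ B; exact phi_key _ _ _
  · intro n hn hnm
    have hn' : (1:ℝ) ≤ (n:ℝ) := by exact_mod_cast hn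
    have hnm' : (n:ℝ) ≤ (nmax:ℝ) := by exact_mod_cast hnm
    have : k * (n:ℝ) < 2 := by nlinarith
    nlinarith
  · intro n hn hnm
    have hn' : (1:ℝ) ≤ (n:ℝ) := by exact_mod_cast hn
    have hnm' : (n:ℝ) + 1 ≤ (nmax:ℝ) := by exact_mod_cast hnm
    constructor
    · ring
    · nlinarith
  · intro B n hB hBn hnm
    have hB' : (1:ℝ) ≤ (B:ℝ) := by exact_mod_cast hB
    have hBn' : (B:ℝ) ≤ (n:ℝ) := by exact_mod_cast hBn
    have hnm' : (n:ℝ) ≤ (nmax:ℝ) := by exact_mod_cast hnm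
    have hp1 : 0 < 1 - k*((B : ℝ) - 1) := by nlinarith
    have hp2 : 0 < 1 - k*((n : ℝ) - (B : ℝ)) := by nlinarith
    refine ⟨hp1, hp2, 4 * B * ((n:ℝ) + 1 - B) * (1 - k*((B:ℝ) - 1)) * (1 - k*((n:ℝ) - B)), ?_, ?_⟩
    · have : (0:ℝ) < (n:ℝ) + 1 - B := by linarith
      positivity
    · rw [phi_key]
      push_cast
      ring
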